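/- Let n ≥ 1, let L ∈ ℝ^{n×n} be a symmetric positive semidefinite matrix with L·1 = 0 and rank n − 1, and let L⁺ be its Moore–Penrose pseudoinverse. Fix two distinct nodes s₁ ≠ s₂ and a gain k > 0. Let r = L⁺_{s₁,s₁} + L⁺_{s₂,s₂} − 2L⁺_{s₁,s₂} be the resistance distance between s₁ and s₂, and let γ = (e_{s₁} − e_{s₂})ᵀ(L⁺)²(e_{s₁} − e_{s₂}) be the biharmonic distance squared between s₁ and s₂. Then L + k·E_{s₁,s₁} + k·E_{s₂,s₂} is invertible and tr((L + k·E_{s₁,s₁} + k·E_{s₂,s₂})⁻¹) = tr(L⁺) + [ n(1 + k(L⁺_{s₁,s₁} + L⁺_{s₂,s₂})) + n k²(L⁺_{s₁,s₁}L⁺_{s₂,s₂} − (L⁺_{s₁,s₂})²) − k²γ ] / ( k(2 + k r) ). -/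

import Mathlib

/-!
Write `𝟙` for the all-ones vector and `n` for the number of nodes. Since `ker L = span 𝟙`, the
Penrose conditions force `L L⁺ = L⁺ L = 1 - 𝟙𝟙ᵀ/n`; hence `L⁺` is symmetric, positive semidefinite
and kills `𝟙`. For one leader `x` with gain `κ` (any `x` with `𝟙ᵀx = 1`) one checks directly that
`(1 - 𝟙xᵀ) L⁺ (1 - x𝟙ᵀ) + κ⁻¹ 𝟙𝟙ᵀ` inverts `L + κ xxᵀ`. The second leader is a rank-one update,
so Sherman–Morrison inverts `L + k xxᵀ + k yyᵀ`, with denominator `2 + k r`, which is positive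
because `r = (x - y)ᵀ L⁺ (x - y) ≥ 0`. Taking traces gives the formula.
-/

open Matrix

namespace Matrix

variable {ι 𝕜 : Type*} [Fintype ι]

theorem add_vecMulVec_mul_sub_eq_one [DecidableEq ι] [Field 𝕜] {A B : Matrix ι ι 𝕜}
    (hAB : A * B = 1) (u v : ι → 𝕜) (h : 1 + v ⬝ᵥ (B *ᵥ u) ≠ 0) :
    (A + vecMulVec u v) *
        (B - (1 + v ⬝ᵥ (B *ᵥ u))⁻¹ • vecMulVec (B *ᵥ u) (v ᵥ* B)) = 1 := by
  have hABu : A *ᵥ (B *ᵥ u) = u := by rw [mulVec_mulVec, hAB, one_mulVec]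
  rw [Matrix.add_mul, Matrix.mul_sub, Matrix.mul_sub, hAB, Matrix.mul_smul, Matrix.mul_smul,
    mul_vecMulVec, hABu, vecMulVec_mul, vecMulVec_mul_vecMulVec, vecMulVec_smul]
  match_scalars
  · field_simp
  · field_simp
    ring

theorem vecMul_eq_mulVec_of_transpose_eq [CommSemiring 𝕜] {A : Matrix ι ι 𝕜} (hA : Aᵀ = A)
    (v : ι → 𝕜) : v ᵥ* A = A *ᵥ v := by
  rw [← vecMul_transpose, hA]

theorem dotProduct_mulVec_comm_of_transpose_eq [CommSemiring 𝕜] {A : Matrix ι ι 𝕜}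
    (hA : Aᵀ = A) (v w : ι → 𝕜) : v ⬝ᵥ (A *ᵥ w) = w ⬝ᵥ (A *ᵥ v) := by
  rw [dotProduct_mulVec, vecMul_eq_mulVec_of_transpose_eq hA, dotProduct_comm]

section Leaders

variable [Field 𝕜] {L Lp : Matrix ι ι 𝕜}

/-- `(1 - 𝟙xᵀ) Lp (1 - x𝟙ᵀ) + κ⁻¹ 𝟙𝟙ᵀ`, multiplied out for symmetric `Lp`. -/
def leaderInv (Lp : Matrix ι ι 𝕜) (x : ι → 𝕜) (κ : 𝕜) : Matrix ι ι 𝕜 :=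
  Lp - vecMulVec 1 (Lp *ᵥ x) - vecMulVec (Lp *ᵥ x) 1 + (x ⬝ᵥ (Lp *ᵥ x) + κ⁻¹) • vecMulVec 1 1

theorem mul_leaderInv_eq_one [DecidableEq ι] (hL1 : L *ᵥ 1 = 0)
    (hLLp : L * Lp = 1 - (Fintype.card ι : 𝕜)⁻¹ • vecMulVec 1 1) (hLp : Lpᵀ = Lp)
    {x : ι → 𝕜} (hx : 1 ⬝ᵥ x = 1) {κ : 𝕜} (hκ : κ ≠ 0) :
    (L + κ • vecMulVec x x) * leaderInv Lp x κ = 1 := by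
  have hLLpx : L *ᵥ (Lp *ᵥ x) = x - (Fintype.card ι : 𝕜)⁻¹ • 1 := by
    rw [mulVec_mulVec, hLLp, sub_mulVec, one_mulVec, smul_mulVec, vecMulVec_mulVec, hx]
    simp
  have hLB : L * leaderInv Lp x κ = 1 - vecMulVec x 1 := by
    simp only [leaderInv, Matrix.mul_add, Matrix.mul_sub, Matrix.mul_smul, mul_vecMulVec, hL1,
      hLLp, hLLpx, zero_vecMulVec, sub_vecMulVec, smul_vecMulVec, smul_zero]
    abel
  have hxB : x ᵥ* leaderInv Lp x κ = κ⁻¹ • 1 := by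
    simp only [leaderInv, vecMul_add, vecMul_sub, vecMul_smul, vecMul_vecMulVec,
      vecMul_eq_mulVec_of_transpose_eq hLp, dotProduct_comm x 1, hx]
    module
  rw [Matrix.add_mul, hLB, Matrix.smul_mul, vecMulVec_mul, hxB, vecMulVec_smul, smul_smul,
    mul_inv_cancel₀ hκ, one_smul, sub_add_cancel]

theorem transpose_leaderInv (hLp : Lpᵀ = Lp) (x : ι → 𝕜) (κ : 𝕜) :
    (leaderInv Lp x κ)ᵀ = leaderInv Lp x κ := by
  simp only [leaderInv, transpose_add, transpose_sub, transpose_smul, transpose_vecMulVec, hLp]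
  abel

theorem leaderInv_mulVec (x : ι → 𝕜) {y : ι → 𝕜} (hy : 1 ⬝ᵥ y = 1) (κ : 𝕜) :
    leaderInv Lp x κ *ᵥ y = Lp *ᵥ (y - x) + ((Lp *ᵥ x) ⬝ᵥ (x - y) + κ⁻¹) • 1 := by
  simp only [leaderInv, add_mulVec, sub_mulVec, smul_mulVec, vecMulVec_mulVec, op_smul_eq_smul,
    hy, mulVec_sub, dotProduct_sub, dotProduct_comm x (Lp *ᵥ x)]
  module

theorem dotProduct_leaderInv_mulVec (hLp : Lpᵀ = Lp) {x y : ι → 𝕜} (hy : 1 ⬝ᵥ y = 1)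
    (κ : 𝕜) :
    y ⬝ᵥ (leaderInv Lp x κ *ᵥ y) = (x - y) ⬝ᵥ (Lp *ᵥ (x - y)) + κ⁻¹ := by
  rw [leaderInv_mulVec x hy, dotProduct_add, dotProduct_smul, dotProduct_comm y 1, hy]
  simp only [mulVec_sub, dotProduct_sub, sub_dotProduct, smul_eq_mul,
    dotProduct_comm (Lp *ᵥ x), dotProduct_mulVec_comm_of_transpose_eq hLp y x]
  ring

theorem trace_leaderInv (hLp : Lpᵀ = Lp) (hLp1 : Lp *ᵥ 1 = 0) (x : ι → 𝕜) (κ : 𝕜) :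
    trace (leaderInv Lp x κ) =
      trace Lp + Fintype.card ι * (x ⬝ᵥ (Lp *ᵥ x)) + Fintype.card ι * κ⁻¹ := by
  have h1Lpx : 1 ⬝ᵥ (Lp *ᵥ x) = 0 := by
    rw [dotProduct_mulVec, vecMul_eq_mulVec_of_transpose_eq hLp, hLp1, zero_dotProduct]
  simp only [leaderInv, trace_add, trace_sub, trace_smul, trace_vecMulVec, h1Lpx,
    dotProduct_comm (Lp *ᵥ x) 1, one_dotProduct_one, smul_eq_mul]
  ring

/-- The Sherman–Morrison update of `leaderInv Lp x k` by `k yyᵀ`. -/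
def twoLeaderInv (Lp : Matrix ι ι 𝕜) (x y : ι → 𝕜) (k : 𝕜) : Matrix ι ι 𝕜 :=
  leaderInv Lp x k - (k / (2 + k * ((x - y) ⬝ᵥ (Lp *ᵥ (x - y))))) •
    vecMulVec (leaderInv Lp x k *ᵥ y) (leaderInv Lp x k *ᵥ y)

theorem mul_twoLeaderInv_eq_one [DecidableEq ι] (hL1 : L *ᵥ 1 = 0)
    (hLLp : L * Lp = 1 - (Fintype.card ι : 𝕜)⁻¹ • vecMulVec 1 1) (hLp : Lpᵀ = Lp)
    {x y : ι → 𝕜} (hx : 1 ⬝ᵥ x = 1) (hy : 1 ⬝ᵥ y = 1) {k : 𝕜} (hk : k ≠ 0)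
    (hr : 2 + k * ((x - y) ⬝ᵥ (Lp *ᵥ (x - y))) ≠ 0) :
    (L + k • vecMulVec x x + k • vecMulVec y y) * twoLeaderInv Lp x y k = 1 := by
  have hden :
      1 + y ⬝ᵥ (leaderInv Lp x k *ᵥ (k • y)) = 2 + k * ((x - y) ⬝ᵥ (Lp *ᵥ (x - y))) := by
    rw [mulVec_smul, dotProduct_smul, dotProduct_leaderInv_mulVec hLp hy, smul_eq_mul]
    field_simp
    ring
  have hSM := add_vecMulVec_mul_sub_eq_one (mul_leaderInv_eq_one hL1 hLLp hLp hx hk) (k • y) y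
    (hden ▸ hr)
  rwa [hden, mulVec_smul, vecMul_eq_mulVec_of_transpose_eq (transpose_leaderInv hLp x k),
    smul_vecMulVec, smul_vecMulVec, smul_smul, inv_mul_eq_div] at hSM

theorem trace_twoLeaderInv (hLp : Lpᵀ = Lp) (hLp1 : Lp *ᵥ 1 = 0) {x y : ι → 𝕜}
    (hy : 1 ⬝ᵥ y = 1) {k : 𝕜} (hk : k ≠ 0) (hr : 2 + k * ((x - y) ⬝ᵥ (Lp *ᵥ (x - y))) ≠ 0) :
    trace (twoLeaderInv Lp x y k) = trace Lp +
      (Fintype.card ι * (1 + k * (x ⬝ᵥ (Lp *ᵥ x) + y ⬝ᵥ (Lp *ᵥ y)))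
        + Fintype.card ι * k ^ 2 * (x ⬝ᵥ (Lp *ᵥ x) * y ⬝ᵥ (Lp *ᵥ y) - (x ⬝ᵥ (Lp *ᵥ y)) ^ 2)
        - k ^ 2 * ((x - y) ⬝ᵥ ((Lp * Lp) *ᵥ (x - y))))
      / (k * (2 + k * ((x - y) ⬝ᵥ (Lp *ᵥ (x - y))))) := by
  have h1 : 1 ⬝ᵥ (Lp *ᵥ (y - x)) = 0 := by
    rw [dotProduct_mulVec, vecMul_eq_mulVec_of_transpose_eq hLp, hLp1, zero_dotProduct]
  have hγ : (Lp *ᵥ (y - x)) ⬝ᵥ (Lp *ᵥ (y - x)) = (x - y) ⬝ᵥ ((Lp * Lp) *ᵥ (x - y)) := by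
    rw [← neg_sub x y, mulVec_neg, neg_dotProduct, dotProduct_neg, neg_neg, ← mulVec_mulVec,
      dotProduct_mulVec (x - y), vecMul_eq_mulVec_of_transpose_eq hLp]
  set a := x ⬝ᵥ (Lp *ᵥ x)
  set c := x ⬝ᵥ (Lp *ᵥ y)
  set d := y ⬝ᵥ (Lp *ᵥ y)
  set γ := (x - y) ⬝ᵥ ((Lp * Lp) *ᵥ (x - y))
  have hr' : (x - y) ⬝ᵥ (Lp *ᵥ (x - y)) = a + d - 2 * c := by
    simp only [mulVec_sub, dotProduct_sub, sub_dotProduct,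
      dotProduct_mulVec_comm_of_transpose_eq hLp y x]
    ring
  have ht : (Lp *ᵥ x) ⬝ᵥ (x - y) = a - c := by
    rw [dotProduct_sub, dotProduct_comm, dotProduct_comm _ y,
      dotProduct_mulVec_comm_of_transpose_eq hLp y x]
  rw [hr'] at hr ⊢
  rw [twoLeaderInv, hr', trace_sub, trace_smul, trace_vecMulVec, trace_leaderInv hLp hLp1,
    leaderInv_mulVec x hy, ht]
  simp only [dotProduct_add, add_dotProduct, dotProduct_smul, smul_dotProduct, h1, hγ,
    dotProduct_comm (Lp *ᵥ _) 1, one_dotProduct_one, smul_eq_mul]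
  field_simp
  ring

end Leaders

section Laplacian

variable {L Lp : Matrix ι ι ℝ}

theorem ker_mulVecLin_eq_span_one [Nonempty ι] (hL1 : L *ᵥ 1 = 0)
    (hrank : L.rank = Fintype.card ι - 1) : LinearMap.ker L.mulVecLin = ℝ ∙ 1 := by
  refine (Submodule.eq_of_le_of_finrank_eq ?_ ?_).symm
  · rwa [Submodule.span_singleton_le_iff_mem, LinearMap.mem_ker, mulVecLin_apply]
  · have hrn := LinearMap.finrank_range_add_finrank_ker L.mulVecLin
    rw [Module.finrank_fintype_fun_eq_card] at hrn
    rw [finrank_span_singleton one_ne_zero]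
    have := Fintype.card_pos (α := ι)
    rw [rank] at hrank
    omega

theorem eq_inv_card_smul_of_mul_eq_zero [DecidableEq ι] [Nonempty ι]
    (hker : LinearMap.ker L.mulVecLin = ℝ ∙ 1) {N : Matrix ι ι ℝ} (hLN : L * N = 0)
    (hN : Nᵀ = N) (hN1 : N *ᵥ 1 = 1) :
    N = (Fintype.card ι : ℝ)⁻¹ • vecMulVec 1 1 := by
  have hcol (j : ι) : ∃ c : ℝ, c • 1 = N.col j := by
    rw [← Submodule.mem_span_singleton, ← hker, LinearMap.mem_ker, mulVecLin_apply,
      ← mulVec_single_one, mulVec_mulVec, hLN, zero_mulVec]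
  choose c hc using hcol
  have hNc : N = vecMulVec c 1 := by
    rw [← hN]
    ext i j
    simpa [vecMulVec_apply] using (congrFun (hc i) j).symm
  have hc1 : (Fintype.card ι : ℝ) • c = 1 := by
    rw [← hN1, hNc, vecMulVec_mulVec, op_smul_eq_smul, one_dotProduct_one]
  have hcard : (Fintype.card ι : ℝ) ≠ 0 := Nat.cast_ne_zero.mpr Fintype.card_ne_zero
  rw [hNc, ← inv_smul_smul₀ hcard c, hc1, smul_vecMulVec]

theorem mul_pinv_mulVec_one (hLt : Lᵀ = L) (hL1 : L *ᵥ 1 = 0) (hp3 : (L * Lp)ᵀ = L * Lp) :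
    (L * Lp) *ᵥ 1 = 0 := by
  rw [← vecMul_eq_mulVec_of_transpose_eq hp3, ← vecMul_vecMul,
    vecMul_eq_mulVec_of_transpose_eq hLt, hL1, zero_vecMul]

theorem pinv_mulVec_one (hLt : Lᵀ = L) (hL1 : L *ᵥ 1 = 0) (hp2 : Lp * L * Lp = Lp)
    (hp3 : (L * Lp)ᵀ = L * Lp) : Lp *ᵥ 1 = 0 := by
  rw [← hp2, mul_assoc, ← mulVec_mulVec, mul_pinv_mulVec_one hLt hL1 hp3, mulVec_zero]

theorem mul_pinv_eq [DecidableEq ι] [Nonempty ι] (hLt : Lᵀ = L) (hL1 : L *ᵥ 1 = 0)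
    (hker : LinearMap.ker L.mulVecLin = ℝ ∙ 1) (hp1 : L * Lp * L = L)
    (hp3 : (L * Lp)ᵀ = L * Lp) : L * Lp = 1 - (Fintype.card ι : ℝ)⁻¹ • vecMulVec 1 1 := by
  have hN : (1 - L * Lp)ᵀ = 1 - L * Lp := by rw [transpose_sub, transpose_one, hp3]
  have hNL : (1 - L * Lp) * L = 0 := by rw [Matrix.sub_mul, Matrix.one_mul, hp1, sub_self]
  have hLN : L * (1 - L * Lp) = 0 :=
    calc L * (1 - L * Lp) = ((1 - L * Lp) * L)ᵀ := by rw [transpose_mul, hLt, hN]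
      _ = 0 := by rw [hNL, transpose_zero]
  have hN1 : (1 - L * Lp) *ᵥ 1 = 1 := by
    rw [sub_mulVec, one_mulVec, mul_pinv_mulVec_one hLt hL1 hp3, sub_zero]
  rw [← eq_inv_card_smul_of_mul_eq_zero hker hLN hN hN1, sub_sub_cancel]

theorem pinv_mul_eq [DecidableEq ι] [Nonempty ι] (hL1 : L *ᵥ 1 = 0)
    (hker : LinearMap.ker L.mulVecLin = ℝ ∙ 1) (hp1 : L * Lp * L = L)
    (hp4 : (Lp * L)ᵀ = Lp * L) : Lp * L = 1 - (Fintype.card ι : ℝ)⁻¹ • vecMulVec 1 1 := by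
  have hN : (1 - Lp * L)ᵀ = 1 - Lp * L := by rw [transpose_sub, transpose_one, hp4]
  have hLN : L * (1 - Lp * L) = 0 := by
    rw [Matrix.mul_sub, Matrix.mul_one, ← mul_assoc, hp1, sub_self]
  have hN1 : (1 - Lp * L) *ᵥ 1 = 1 := by
    rw [sub_mulVec, one_mulVec, ← mulVec_mulVec, hL1, mulVec_zero, sub_zero]
  rw [← eq_inv_card_smul_of_mul_eq_zero hker hLN hN hN1, sub_sub_cancel]

theorem transpose_pinv (hLt : Lᵀ = L) (hp2 : Lp * L * Lp = Lp) (hp3 : (L * Lp)ᵀ = L * Lp)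
    (hp4 : (Lp * L)ᵀ = Lp * L) (hcomm : L * Lp = Lp * L) : Lpᵀ = Lp :=
  calc Lpᵀ = (Lp * (L * Lp))ᵀ := by rw [← mul_assoc, hp2]
    _ = L * Lp * Lpᵀ := by rw [transpose_mul, hp3]
    _ = Lp * (Lp * L)ᵀ := by rw [hcomm, mul_assoc, transpose_mul, hLt]
    _ = Lp := by rw [hp4, ← hcomm, ← mul_assoc, hp2]

theorem posSemidef_pinv (hL : L.PosSemidef) (hp2 : Lp * L * Lp = Lp) (hLpt : Lpᵀ = Lp) :
    Lp.PosSemidef := by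
  have := hL.conjTranspose_mul_mul_same Lp
  rwa [conjTranspose_eq_transpose_of_trivial, hLpt, hp2] at this

end Laplacian

end Matrix

theorem stmt_6_general {n : ℕ} (L Lp : Matrix (Fin n) (Fin n) ℝ)
    (hL : L.PosSemidef) (hL1 : L *ᵥ (fun _ => (1 : ℝ)) = 0) (hrank : L.rank = n - 1)
    (hp1 : L * Lp * L = L) (hp2 : Lp * L * Lp = Lp)
    (hp3 : (L * Lp)ᵀ = L * Lp) (hp4 : (Lp * L)ᵀ = Lp * L)
    (s₁ s₂ : Fin n) (k : ℝ) (hk : 0 < k)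
    (r γ : ℝ)
    (hr : r = Lp s₁ s₁ + Lp s₂ s₂ - 2 * Lp s₁ s₂)
    (hγ : γ = (Pi.single s₁ 1 - Pi.single s₂ 1) ⬝ᵥ
      ((Lp * Lp) *ᵥ (Pi.single s₁ 1 - Pi.single s₂ 1))) :
    IsUnit (L + k • Matrix.single s₁ s₁ (1 : ℝ)
        + k • Matrix.single s₂ s₂ (1 : ℝ)) ∧
    ((L + k • Matrix.single s₁ s₁ (1 : ℝ)
        + k • Matrix.single s₂ s₂ (1 : ℝ))⁻¹).trace =
      Lp.trace +
        ((n : ℝ) * (1 + k * (Lp s₁ s₁ + Lp s₂ s₂))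
          + (n : ℝ) * k ^ 2 * (Lp s₁ s₁ * Lp s₂ s₂ - (Lp s₁ s₂) ^ 2)
          - k ^ 2 * γ) / (k * (2 + k * r)) := by
  have : Nonempty (Fin n) := ⟨s₁⟩
  have hLt : Lᵀ = L := (isHermitian_iff_isSymm.mp hL.isHermitian).eq
  have hker := ker_mulVecLin_eq_span_one hL1 (by rwa [Fintype.card_fin])
  have hLLp := mul_pinv_eq hLt hL1 hker hp1 hp3
  have hLpt := transpose_pinv hLt hp2 hp3 hp4 (hLLp.trans (pinv_mul_eq hL1 hker hp1 hp4).symm)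
  have hentry (i j : Fin n) : Pi.single i 1 ⬝ᵥ (Lp *ᵥ Pi.single j 1) = Lp i j := by simp
  have hsum (i : Fin n) : 1 ⬝ᵥ (Pi.single i 1 : Fin n → ℝ) = 1 := by simp
  have hr' :
      (Pi.single s₁ 1 - Pi.single s₂ 1) ⬝ᵥ (Lp *ᵥ (Pi.single s₁ 1 - Pi.single s₂ 1)) = r := by
    simp only [mulVec_sub, dotProduct_sub, sub_dotProduct, hentry, hr,
      IsSymm.apply hLpt s₁ s₂]
    ring
  have hden : 2 + k * r ≠ 0 := by
    have hr0 := (posSemidef_pinv hL hp2 hLpt).dotProduct_mulVec_nonneg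
      (Pi.single s₁ 1 - Pi.single s₂ 1)
    rw [star_trivial, hr'] at hr0
    positivity
  simp only [single_eq_single_vecMulVec_single]
  have hM := mul_twoLeaderInv_eq_one hL1 hLLp hLpt (hsum s₁) (hsum s₂) hk.ne' (hr' ▸ hden)
  refine ⟨(isUnit_iff_isUnit_det _).mpr (isUnit_det_of_right_inverse hM), ?_⟩
  rw [inv_eq_right_inv hM, trace_twoLeaderInv hLpt (pinv_mulVec_one hLt hL1 hp2 hp3) (hsum s₂)
    hk.ne' (hr' ▸ hden), hr', ← hγ]
  simp only [hentry, Fintype.card_fin]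

/-- Two noise-corrupted leaders. For the Laplacian `L` of a connected undirected
weighted graph with Moore–Penrose pseudoinverse `Lp`, distinct nodes `s₁ ≠ s₂` and gain `k > 0`,
with `r` the resistance distance and `γ` the biharmonic distance squared between `s₁` and `s₂`,
the matrix `L + k E_{s₁s₁} + k E_{s₂s₂}` is invertible and
`tr((L + kE₁ + kE₂)⁻¹) = tr L⁺ + [n(1 + k(L⁺₁₁+L⁺₂₂)) + nk²(L⁺₁₁L⁺₂₂ − (L⁺₁₂)²) − k²γ]/(k(2+kr))`. -/
theorem stmt_6 {n : ℕ} (hn : 1 ≤ n) (L Lp : Matrix (Fin n) (Fin n) ℝ)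
    (hL : L.PosSemidef) (hL1 : L *ᵥ (fun _ => (1 : ℝ)) = 0) (hrank : L.rank = n - 1)
    (hp1 : L * Lp * L = L) (hp2 : Lp * L * Lp = Lp)
    (hp3 : (L * Lp)ᵀ = L * Lp) (hp4 : (Lp * L)ᵀ = Lp * L)
    (s₁ s₂ : Fin n) (hs : s₁ ≠ s₂) (k : ℝ) (hk : 0 < k)
    (r γ : ℝ)
    (hr : r = Lp s₁ s₁ + Lp s₂ s₂ - 2 * Lp s₁ s₂)
    (hγ : γ = (Pi.single s₁ 1 - Pi.single s₂ 1) ⬝ᵥ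
      ((Lp * Lp) *ᵥ (Pi.single s₁ 1 - Pi.single s₂ 1))) :
    IsUnit (L + k • Matrix.single s₁ s₁ (1 : ℝ)
        + k • Matrix.single s₂ s₂ (1 : ℝ)) ∧
    ((L + k • Matrix.single s₁ s₁ (1 : ℝ)
        + k • Matrix.single s₂ s₂ (1 : ℝ))⁻¹).trace =
      Lp.trace +
        ((n : ℝ) * (1 + k * (Lp s₁ s₁ + Lp s₂ s₂))
          + (n : ℝ) * k ^ 2 * (Lp s₁ s₁ * Lp s₂ s₂ - (Lp s₁ s₂) ^ 2)
          - k ^ 2 * γ) / (k * (2 + k * r)) :=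
  stmt_6_general L Lp hL hL1 hrank hp1 hp2 hp3 hp4 s₁ s₂ k hk r γ hr hγ
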